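/- Let B, Γ ∈ ℝ^{N×M}, let Λ ∈ ℝ^{N×N} be symmetric positive definite, and set Σ_D := B Bᵀ + Λ and Σ := I_M − Bᵀ Σ_D⁻¹ B. Let Θ₁, Θ₂ ∈ ℝ^{M×M} be orthogonal, and define B̃ := B Θ₁, Γ̃ := Γ Θ₂, and Σ̃ := I_M − B̃ᵀ Σ_D⁻¹ B̃. Then Γ̃ Σ̃^{-1/2} B̃ᵀ Σ_D⁻¹ = Γ (Θ₂ Θ₁ᵀ) Σ^{-1/2} Bᵀ Σ_D⁻¹, and Θ₂ Θ₁ᵀ is orthogonal. -/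

import Mathlib

open scoped Classical

/-- The (unique) symmetric positive semidefinite square root of a positive semidefinite
real matrix, extended by `0` to arbitrary matrices. -/
noncomputable def matSqrt {M : ℕ} (S : Matrix (Fin M) (Fin M) ℝ) : Matrix (Fin M) (Fin M) ℝ :=
  if h : S.PosSemidef then (h.1.eigenvectorUnitary : Matrix (Fin M) (Fin M) ℝ) *
    Matrix.diagonal (fun i => Real.sqrt (h.1.eigenvalues i)) *
    (star h.1.eigenvectorUnitary : Matrix (Fin M) (Fin M) ℝ) else 0

open scoped MatrixOrder in
lemma matSqrt_eq_cfcSqrt {M : ℕ} {S : Matrix (Fin M) (Fin M) ℝ} (hS : S.PosSemidef) :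
    matSqrt S = CFC.sqrt S := by
  rw [matSqrt, dif_pos hS, CFC.sqrt_eq_cfc, cfc_nnreal_eq_real _ S, hS.1.cfc_eq]
  simp only [Matrix.IsHermitian.cfc, Unitary.conjStarAlgAut_apply]
  congr 2
  ext i j
  simp [Matrix.diagonal_apply, max_eq_left (hS.eigenvalues_nonneg _)]

open scoped MatrixOrder in
open Matrix in
/-- **Step 1 of the proof of Theorem 1.** Rotating the exposure loadings by `Θ₁` and the
outcome loadings by `Θ₂` changes the confounding-bias matrix
`C = Γ Σ_{U|D}^{-1/2} Bᵀ Σ_D⁻¹` into `Γ (Θ₂ Θ₁ᵀ) Σ_{U|D}^{-1/2} Bᵀ Σ_D⁻¹`, and `Θ₂ Θ₁ᵀ` is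
orthogonal. -/
theorem bias_matrix_two_rotations
    {N M : ℕ}
    (B Γ : Matrix (Fin N) (Fin M) ℝ)
    (Λ : Matrix (Fin N) (Fin N) ℝ) (hΛ : Λ.PosDef)
    (SD : Matrix (Fin N) (Fin N) ℝ) (hSD : SD = B * B.transpose + Λ)
    (Sig : Matrix (Fin M) (Fin M) ℝ)
    (hSig : Sig = (1 : Matrix (Fin M) (Fin M) ℝ) - B.transpose * SD⁻¹ * B)
    (Θ₁ Θ₂ : Matrix (Fin M) (Fin M) ℝ)
    (hΘ₁ : Θ₁.transpose * Θ₁ = 1) (hΘ₂ : Θ₂.transpose * Θ₂ = 1)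
    (Btil Γtil : Matrix (Fin N) (Fin M) ℝ)
    (hBtil : Btil = B * Θ₁) (hΓtil : Γtil = Γ * Θ₂)
    (Sigtil : Matrix (Fin M) (Fin M) ℝ)
    (hSigtil : Sigtil = (1 : Matrix (Fin M) (Fin M) ℝ) - Btil.transpose * SD⁻¹ * Btil) :
    Γtil * (matSqrt Sigtil)⁻¹ * Btil.transpose * SD⁻¹ =
      Γ * (Θ₂ * Θ₁.transpose) * (matSqrt Sig)⁻¹ * B.transpose * SD⁻¹ ∧
    (Θ₂ * Θ₁.transpose).transpose * (Θ₂ * Θ₁.transpose) = 1 := by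
  have hΘ₁o : Θ₁ * Θ₁.transpose = 1 := mul_eq_one_comm.mp hΘ₁
  -- SD is positive definite
  have hBBt : (B * B.transpose).PosSemidef := by
    simpa using posSemidef_self_mul_conjTranspose B
  have hSDpd : SD.PosDef := hSD ▸ Matrix.PosDef.posSemidef_add hBBt hΛ
  have : Invertible SD := hSDpd.isUnit.invertible
  -- Sig is positive semidefinite via the Schur complement
  have hblk2 : (fromBlocks (B * B.transpose) B B.transpose
      (1 : Matrix (Fin M) (Fin M) ℝ)).PosSemidef := by
    have := posSemidef_self_mul_conjTranspose
      (fromBlocks B (0 : Matrix (Fin N) (Fin M) ℝ) (1 : Matrix (Fin M) (Fin M) ℝ) (0 : Matrix (Fin M) (Fin M) ℝ))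
    simpa [fromBlocks_transpose, fromBlocks_multiply] using this
  have hblk1 : (fromBlocks Λ (0 : Matrix (Fin N) (Fin M) ℝ)
      (0 : Matrix (Fin M) (Fin N) ℝ) (0 : Matrix (Fin M) (Fin M) ℝ)).PosSemidef := by
    rw [posSemidef_iff_dotProduct_mulVec]
    constructor
    · have hΛt : Λᵀ = Λ := by simpa using hΛ.isHermitian.eq
      show _ = _
      simp [fromBlocks_transpose, hΛt]
    · intro x
      have := (posSemidef_iff_dotProduct_mulVec.mp hΛ.posSemidef).2 (x ∘ Sum.inl)
      simpa [fromBlocks_mulVec, dotProduct, Fintype.sum_sum_type] using this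
  have hblk : (fromBlocks SD B B.conjTranspose
      (1 : Matrix (Fin M) (Fin M) ℝ)).PosSemidef := by
    have h := hblk2.add hblk1
    have : fromBlocks (B * B.transpose) B B.transpose (1 : Matrix (Fin M) (Fin M) ℝ) +
        fromBlocks Λ 0 0 0 = fromBlocks SD B B.conjTranspose 1 := by
      rw [fromBlocks_add, hSD]
      simp
    rwa [this] at h
  have hSigPsd : Sig.PosSemidef := by
    rw [hSig]
    have := (PosDef.fromBlocks₁₁ B (1 : Matrix (Fin M) (Fin M) ℝ) hSDpd).mp hblk
    simpa using this
  -- Sigtil = Θ₁ᵀ Sig Θ₁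
  have hST : Sigtil = Θ₁.transpose * Sig * Θ₁ := by
    rw [hSigtil, hSig, hBtil, transpose_mul]
    rw [Matrix.mul_sub, Matrix.sub_mul, Matrix.mul_one, hΘ₁]
    simp only [Matrix.mul_assoc]
  have hSigtilPsd : Sigtil.PosSemidef := by
    rw [hST]
    simpa using hSigPsd.conjTranspose_mul_mul_same Θ₁
  -- sqrt of the rotated matrix
  have hcancel : ∀ {k : ℕ} (X : Matrix (Fin M) (Fin k) ℝ), Θ₁ * (Θ₁.transpose * X) = X := by
    intro k X; rw [← Matrix.mul_assoc, hΘ₁o, Matrix.one_mul]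
  have hsq : (Θ₁.transpose * CFC.sqrt Sig * Θ₁) ^ 2 = Sigtil := by
    rw [pow_two, hST]
    have h2 : CFC.sqrt Sig * CFC.sqrt Sig = Sig := CFC.sqrt_mul_sqrt_self Sig hSigPsd.nonneg
    calc Θ₁.transpose * CFC.sqrt Sig * Θ₁ * (Θ₁.transpose * CFC.sqrt Sig * Θ₁)
        = Θ₁.transpose * (CFC.sqrt Sig * (Θ₁ * (Θ₁.transpose * (CFC.sqrt Sig * Θ₁)))) := by
          simp only [Matrix.mul_assoc]
      _ = Θ₁.transpose * (Sig * Θ₁) := by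
          rw [hcancel, ← Matrix.mul_assoc (CFC.sqrt Sig), h2]
      _ = Θ₁.transpose * Sig * Θ₁ := (Matrix.mul_assoc _ _ _).symm
  have hconjPsd : (Θ₁.transpose * CFC.sqrt Sig * Θ₁).PosSemidef := by
    simpa using (CFC.sqrt_nonneg Sig).posSemidef.conjTranspose_mul_mul_same Θ₁
  have hsqrt : matSqrt Sigtil = Θ₁.transpose * matSqrt Sig * Θ₁ := by
    rw [matSqrt_eq_cfcSqrt hSigtilPsd, matSqrt_eq_cfcSqrt hSigPsd]
    exact CFC.sqrt_unique (by rw [← pow_two]; exact hsq) hconjPsd.nonneg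
  have hinv : (matSqrt Sigtil)⁻¹ = Θ₁.transpose * (matSqrt Sig)⁻¹ * Θ₁ := by
    rw [hsqrt, Matrix.mul_inv_rev, Matrix.mul_inv_rev,
      Matrix.inv_eq_left_inv hΘ₁, Matrix.inv_eq_left_inv hΘ₁o, Matrix.mul_assoc]
  constructor
  · rw [hΓtil, hBtil, hinv, transpose_mul]
    simp only [Matrix.mul_assoc]
    rw [hcancel]
  · rw [transpose_mul, transpose_transpose, Matrix.mul_assoc,
      ← Matrix.mul_assoc Θ₂.transpose, hΘ₂, Matrix.one_mul, hΘ₁o]
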